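/- Suppose A is an (n+1)×(n+1) orthogonal matrix with first column (1/√(n+1))·𝟙_{n+1}, written in block form with first row (1/√(n+1), a, u) (u a row vector of length n-1) and remaining rows ((1/√(n+1))𝟙_n, v^T, X) where v is a row vector of length n and X is n×(n-1), and suppose a ≠ -√(n/(n+1)). Then the n×n matrix Ã = ( (1/√n)𝟙_n | X + (√(n/(n+1)) + a)^{-1}·(-v^T + (1/√(n(n+1)))𝟙_n)·u ) is orthogonal. -/

import Mathlib

open Real Matrix

/-!
Write `c = 1/√(n+1)`, `d = 1/√n`, `e = 1/√(n(n+1))`, `s = √(n/(n+1))`, so that `e s = c²`,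
`s² + c² = 1` and `d² = c² + e²`. Orthonormality of the rows `(c, a, u)` and `(c, vᵢ, Xᵢ)` of `A`
says `c² + a² + u⬝u = 1`, `c² + a vᵢ + u⬝Xᵢ = 0` and `c² + vᵢ vⱼ + Xᵢ⬝Xⱼ = δᵢⱼ`. The rows of `Ã`
are `(d, Xᵢ + λᵢ u)` with `λᵢ = (s + a)⁻¹ (e - vᵢ)`; expanding their dot products and substituting
these relations, the term `λᵢ λⱼ (u⬝u) = λᵢ λⱼ (s - a)(s + a)` loses one factor `(s + a)⁻¹`, and
what remains is a polynomial identity.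
-/

namespace Matrix

theorem dotProduct_eq_head_mul_head_add {α : Type*} [AddCommMonoid α] [Mul α] {n : ℕ}
    (v w : Fin (n + 1) → α) :
    v ⬝ᵥ w = vecHead v * vecHead w + vecTail v ⬝ᵥ vecTail w := by
  conv_lhs => rw [← cons_head_tail v]
  exact cons_dotProduct _ _ _

theorem mem_orthogonalGroup_iff_dotProduct {α ι : Type*} [CommRing α] [Fintype ι]
    [DecidableEq ι] {A : Matrix ι ι α} :
    A ∈ orthogonalGroup ι α ↔ ∀ i j, A i ⬝ᵥ A j = (1 : Matrix ι ι α) i j := by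
  rw [mem_orthogonalGroup_iff, ← Matrix.ext_iff]
  rfl

end Matrix

section Constants

variable {p q : ℝ}

theorem one_div_sqrt_mul_mul_sqrt_div (hp : 0 < p) :
    1 / √(p * q) * √(p / q) = (1 / √q) ^ 2 := by
  have hsp : √p ≠ 0 := (sqrt_pos.2 hp).ne'
  rw [sqrt_mul hp.le, sqrt_div hp.le]
  field_simp

theorem sqrt_div_sq_add_one_div_sqrt_sq (hp : 0 ≤ p) (hpq : p + 1 = q) :
    √(p / q) ^ 2 + (1 / √q) ^ 2 = 1 := by
  have hq : 0 < q := by linarith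
  rw [sq_sqrt (by positivity), div_pow, sq_sqrt hq.le, ← hpq]
  field_simp

theorem one_div_sqrt_sq_eq_add (hp : 0 < p) (hpq : p + 1 = q) :
    (1 / √p) ^ 2 = (1 / √q) ^ 2 + (1 / √(p * q)) ^ 2 := by
  have hq : 0 < q := by linarith
  rw [div_pow, div_pow, div_pow, sq_sqrt hp.le, sq_sqrt hq.le, sq_sqrt (mul_pos hp hq).le, ← hpq]
  field_simp

end Constants

theorem dotProduct_add_smul_add_smul_eq {K ι : Type*} [Field K] [Fintype ι]
    {c d e s a vx vy δ : K} {x y u : ι → K}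
    (hes : e * s = c ^ 2) (hs : s ^ 2 + c ^ 2 = 1) (hd : d ^ 2 = c ^ 2 + e ^ 2)
    (hsa : s + a ≠ 0)
    (huu : c ^ 2 + a ^ 2 + u ⬝ᵥ u = 1) (hux : c ^ 2 + a * vx + u ⬝ᵥ x = 0)
    (huy : c ^ 2 + a * vy + u ⬝ᵥ y = 0) (hxy : c ^ 2 + vx * vy + x ⬝ᵥ y = δ) :
    d ^ 2 + (x + ((s + a)⁻¹ * (-vx + e)) • u) ⬝ᵥ (y + ((s + a)⁻¹ * (-vy + e)) • u) = δ := by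
  have hL : (s + a)⁻¹ * (s + a) = 1 := inv_mul_cancel₀ hsa
  set L := (s + a)⁻¹
  simp only [add_dotProduct, dotProduct_add, smul_dotProduct, dotProduct_smul, smul_eq_mul,
    dotProduct_comm x u]
  linear_combination hxy + L * (-vy + e) * hux + L * (-vx + e) * huy
    + L ^ 2 * (-vx + e) * (-vy + e) * huu + hd + (L * (-vy + e) + L * (-vx + e)) * hes
    - L ^ 2 * (-vx + e) * (-vy + e) * hs
    + (L * (s - a) * (-vx + e) * (-vy + e) - e ^ 2 + vx * vy) * hL

theorem stmt9 (m : ℕ) (A : Matrix (Fin (m + 2)) (Fin (m + 2)) ℝ)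
    (hA : A ∈ Matrix.orthogonalGroup (Fin (m + 2)) ℝ)
    (hcol : ∀ i, A i 0 = 1 / Real.sqrt (m + 2))
    (a : ℝ) (u : Fin m → ℝ) (v : Fin (m + 1) → ℝ)
    (X : Matrix (Fin (m + 1)) (Fin m) ℝ)
    (ha : a = A 0 1) (hu : ∀ j : Fin m, u j = A 0 ⟨j.1 + 2, by omega⟩)
    (hv : ∀ i : Fin (m + 1), v i = A i.succ 1)
    (hX : ∀ (i : Fin (m + 1)) (j : Fin m), X i j = A i.succ ⟨j.1 + 2, by omega⟩)
    (hane : a ≠ -Real.sqrt ((m + 1) / (m + 2)))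
    (At : Matrix (Fin (m + 1)) (Fin (m + 1)) ℝ)
    (hAt0 : ∀ i, At i 0 = 1 / Real.sqrt (m + 1))
    (hAt : ∀ (i : Fin (m + 1)) (j : Fin m),
      At i j.succ = X i j +
        (Real.sqrt ((m + 1) / (m + 2)) + a)⁻¹ *
          ((-v i + 1 / Real.sqrt ((m + 1) * (m + 2))) * u j)) :
    At ∈ Matrix.orthogonalGroup (Fin (m + 1)) ℝ := by
  have hm : ((m : ℝ) + 1) + 1 = m + 2 := by ring
  have hrow : ∀ p q, A p ⬝ᵥ A q = (1 / √(m + 2)) ^ 2 + A p 1 * A q 1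
      + vecTail (vecTail (A p)) ⬝ᵥ vecTail (vecTail (A q)) := fun p q => by
    rw [dotProduct_eq_head_mul_head_add, dotProduct_eq_head_mul_head_add]
    change A p 0 * A q 0 + (A p 1 * A q 1 + _) = _
    rw [hcol, hcol]
    ring
  have hu' : vecTail (vecTail (A 0)) = u := funext fun j => (hu j).symm
  have hX' : ∀ i, vecTail (vecTail (A i.succ)) = X i := fun i => funext fun j => (hX i j).symm
  have hAt' : ∀ i, vecTail (At i) = X i + ((√((m + 1) / (m + 2)) + a)⁻¹
      * (-v i + 1 / √((m + 1) * (m + 2)))) • u := fun i => funext fun j => by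
    simp [vecTail, hAt, mul_assoc]
  rw [mem_orthogonalGroup_iff_dotProduct] at hA ⊢
  intro i j
  rw [dotProduct_eq_head_mul_head_add, hAt', hAt', vecHead, vecHead, hAt0, hAt0, ← sq]
  refine dotProduct_add_smul_add_smul_eq (one_div_sqrt_mul_mul_sqrt_div (by positivity))
    (sqrt_div_sq_add_one_div_sqrt_sq (by positivity) hm)
    (one_div_sqrt_sq_eq_add (by positivity) hm)
    (fun h => hane (eq_neg_of_add_eq_zero_right h)) ?_ ?_ ?_ ?_
  · simpa [hrow, hu', ← ha, sq] using hA 0 0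
  · simpa [hrow, hu', hX', ← ha, ← hv, one_apply, (Fin.succ_ne_zero _).symm] using hA 0 i.succ
  · simpa [hrow, hu', hX', ← ha, ← hv, one_apply, (Fin.succ_ne_zero _).symm] using hA 0 j.succ
  · simpa [hrow, hX', ← hv, one_apply] using hA i.succ j.succ
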